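/- L'Hospital's rule for regulated functions (∞ case): Let f, g be regulated on (a,b), α strictly increasing, with D_α f and D_α g existing everywhere, D_α g of constant sign on (a,b), lim_{x↑b} (D_α f)(x)/(D_α g)(x) = A ∈ [-∞,∞], and lim_{x↑b} g^-(x) = +∞. Then lim_{x↑b} f^-(x)/g^-(x) = A. -/

import Mathlib

open Filter Topology Function Set MeasureTheory

/-- `x` lies in the interval `(a, b)` with extended-real endpoints. -/
def MemI (a b : EReal) (x : ℝ) : Prop := a < (x : EReal) ∧ (x : EReal) < b

/-- `f` is regulated on `(a, b)`: both one-sided limits exist (as real numbers)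
at every point of `(a, b)`. -/
def RegulatedOn' (f : ℝ → ℝ) (a b : EReal) : Prop :=
  ∀ x : ℝ, MemI a b x →
    (∃ L : ℝ, Tendsto f (𝓝[<] x) (𝓝 L)) ∧ ∃ R : ℝ, Tendsto f (𝓝[>] x) (𝓝 R)

/-- The symmetric `α`-derivative of `f` at `x` equals `A`:
`(D_α f)(x) = lim_{h↓0} (f⁻(x+h) - f⁺(x-h)) / (α⁻(x+h) - α⁺(x-h))`. -/
def HasDerivAlpha (f α : ℝ → ℝ) (x A : ℝ) : Prop :=
  Tendsto (fun h : ℝ =>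
      (leftLim f (x + h) - rightLim f (x - h)) /
        (leftLim α (x + h) - rightLim α (x - h)))
    (𝓝[>] (0 : ℝ)) (𝓝 A)

/-- The filter of real numbers approaching `b : EReal` from the left (`x ↑ b`). -/
noncomputable def leftFilter (b : EReal) : Filter ℝ := comap (fun x : ℝ => (x : EReal)) (𝓝[<] b)

/-- The filter of real numbers approaching `a : EReal` from the right (`x ↓ a`). -/
noncomputable def rightFilter (a : EReal) : Filter ℝ := comap (fun x : ℝ => (x : EReal)) (𝓝[>] a)


/-!
Monotonicity principle: if `φ` is regulated on `(a, b)` and `φ⁺(x - h) < φ⁻(x + h)` for all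
small `h > 0` at every `x`, then `φ⁻` is strictly increasing. Indeed `φ⁻ ≤ φ⁺` and `φ⁺` is upper
semicontinuous, so continuous induction runs on its closed superlevel sets. The `α`-increments in
`D_α` are positive, so `c₁ D_α f + c₂ D_α g > 0` gives this hypothesis for `φ = c₁ f + c₂ g`, and
`c₁ f⁻ + c₂ g⁻` increases. Thus `D_α g < 0` would make `g⁻` decrease, and `D_α f < M D_α g` near `b`
gives `f⁻ ≤ M g⁻ + C` there; dividing by `g⁻ → ∞` bounds `f⁻ / g⁻` by any `M' > M`.
-/

section OneSidedLimits

theorem tendsto_nhdsWithin_of_mapClusterPt {X Y : Type*} [TopologicalSpace X]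
    [TopologicalSpace Y] [RegularSpace Y] {f g : X → Y} {s : Set X} (hs : IsOpen s) {x : X}
    {y : Y} (hf : Tendsto f (𝓝[s] x) (𝓝 y)) (hg : ∀ z, MapClusterPt (g z) (𝓝 z) f) :
    Tendsto g (𝓝[s] x) (𝓝 y) := by
  refine (closed_nhds_basis y).tendsto_right_iff.2 fun C ⟨hC, hCclosed⟩ => ?_
  have hfC := eventually_eventually_nhdsWithin.2 (hf hC)
  filter_upwards [hfC, self_mem_nhdsWithin] with z hz hzs
  rw [hs.nhdsWithin_eq hzs] at hz
  exact hCclosed.mem_of_mapClusterPt (hg z) hz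

variable {f : ℝ → ℝ} {s : Set ℝ} {x y : ℝ}

theorem tendsto_leftLim_nhdsWithin (hs : IsOpen s) (hf : Tendsto f (𝓝[s] x) (𝓝 y)) :
    Tendsto (leftLim f) (𝓝[s] x) (𝓝 y) :=
  tendsto_nhdsWithin_of_mapClusterPt hs hf fun z =>
    (mapClusterPt_leftLim f z).mono nhdsWithin_le_nhds

theorem tendsto_rightLim_nhdsWithin (hs : IsOpen s) (hf : Tendsto f (𝓝[s] x) (𝓝 y)) :
    Tendsto (rightLim f) (𝓝[s] x) (𝓝 y) :=
  tendsto_nhdsWithin_of_mapClusterPt hs hf fun z =>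
    (mapClusterPt_rightLim f z).mono nhdsWithin_le_nhds

theorem tendsto_add_nhdsGT_zero (x : ℝ) : Tendsto (x + ·) (𝓝[>] 0) (𝓝[>] x) := by
  have h := (map_add_left_nhdsGT (c := x) (a := 0)).le
  rwa [add_zero] at h

theorem tendsto_sub_nhdsGT_zero (x : ℝ) : Tendsto (x - ·) (𝓝[>] 0) (𝓝[<] x) := by
  have h := (map_subLeft_nhdsGT (c := x) (a := 0)).le
  rwa [sub_zero] at h

theorem leftLim_le_rightLim_of_eventually_lt (hl : Tendsto f (𝓝[<] x) (𝓝 (leftLim f x)))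
    (hr : Tendsto f (𝓝[>] x) (𝓝 (rightLim f x)))
    (H : ∀ᶠ h in 𝓝[>] 0, rightLim f (x - h) < leftLim f (x + h)) :
    leftLim f x ≤ rightLim f x :=
  le_of_tendsto_of_tendsto
    ((tendsto_rightLim_nhdsWithin isOpen_Iio hl).comp (tendsto_sub_nhdsGT_zero x))
    ((tendsto_leftLim_nhdsWithin isOpen_Ioi hr).comp (tendsto_add_nhdsGT_zero x))
    (H.mono fun _ h => h.le)

theorem upperSemicontinuousAt_rightLim (hl : Tendsto f (𝓝[<] x) (𝓝 (leftLim f x)))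
    (hr : Tendsto f (𝓝[>] x) (𝓝 (rightLim f x))) (hjump : leftLim f x ≤ rightLim f x) :
    UpperSemicontinuousAt (rightLim f) x := by
  intro y hy
  rw [← nhdsLT_sup_nhdsGE, eventually_sup]
  exact ⟨(tendsto_rightLim_nhdsWithin isOpen_Iio hl).eventually_lt_const (hjump.trans_lt hy),
    (continuousWithinAt_rightLim_Ici hr).eventually_lt_const hy⟩

theorem le_leftLim_of_monotoneOn {u : ℝ} (hf : MonotoneOn f (Icc u x)) (hux : u < x) :
    f u ≤ leftLim f x := by
  have hbdd : BddAbove (f '' Ioo u x) := ⟨f x, forall_mem_image.2 fun z hz =>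
    hf (Ioo_subset_Icc_self hz) (right_mem_Icc.2 hux.le) hz.2.le⟩
  have hlim : Tendsto f (𝓝[<] x) (𝓝 (leftLim f x)) := tendsto_leftLim_of_tendsto
    ⟨_, (hf.mono Ioo_subset_Icc_self).tendsto_nhdsWithin_Ioo_left (nonempty_Ioo.2 hux) hbdd⟩
  refine ge_of_tendsto hlim ?_
  filter_upwards [Ioo_mem_nhdsLT hux] with z hz
  exact hf (left_mem_Icc.2 hux.le) (Ioo_subset_Icc_self hz) hz.1.le

theorem rightLim_le_of_monotoneOn {v : ℝ} (hf : MonotoneOn f (Icc x v)) (hxv : x < v) :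
    rightLim f x ≤ f v := by
  have hbdd : BddBelow (f '' Ioo x v) := ⟨f x, forall_mem_image.2 fun z hz =>
    hf (left_mem_Icc.2 hxv.le) (Ioo_subset_Icc_self hz) hz.1.le⟩
  have hlim : Tendsto f (𝓝[>] x) (𝓝 (rightLim f x)) := tendsto_rightLim_of_tendsto
    ⟨_, (hf.mono Ioo_subset_Icc_self).tendsto_nhdsWithin_Ioo_right (nonempty_Ioo.2 hxv) hbdd⟩
  refine le_of_tendsto hlim ?_
  filter_upwards [Ioo_mem_nhdsGT hxv] with z hz
  exact hf (Ioo_subset_Icc_self hz) (right_mem_Icc.2 hxv.le) hz.2.le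

end OneSidedLimits

section Interval

variable {a b : EReal} {x u v : ℝ}

theorem isOpen_setOf_memI : IsOpen {x : ℝ | MemI a b x} :=
  isOpen_Ioo.preimage continuous_coe_real_ereal

theorem Icc_subset_setOf_memI (hu : MemI a b u) (hv : MemI a b v) :
    Icc u v ⊆ {x : ℝ | MemI a b x} := fun _ hx =>
  ⟨hu.1.trans_le (EReal.coe_le_coe_iff.2 hx.1), (EReal.coe_le_coe_iff.2 hx.2).trans_lt hv.2⟩

theorem eventually_memI_add (hx : MemI a b x) : ∀ᶠ h in 𝓝[>] 0, MemI a b (x + h) :=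
  ((tendsto_add_nhdsGT_zero x).mono_right nhdsWithin_le_nhds).eventually
    (isOpen_setOf_memI.mem_nhds hx)

theorem eventually_memI_sub (hx : MemI a b x) : ∀ᶠ h in 𝓝[>] 0, MemI a b (x - h) :=
  ((tendsto_sub_nhdsGT_zero x).mono_right nhdsWithin_le_nhds).eventually
    (isOpen_setOf_memI.mem_nhds hx)

theorem leftFilter_neBot (hb : ⊥ < b) : (leftFilter b).NeBot := by
  refine comap_neBot fun t ht => ?_
  obtain ⟨l, hl, hsub⟩ := (mem_nhdsLT_iff_exists_Ioo_subset' hb).1 ht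
  obtain ⟨x, hlx, hxb⟩ := EReal.lt_iff_exists_real_btwn.1 (mem_Iio.1 hl)
  exact ⟨x, hsub ⟨hlx, hxb⟩⟩

theorem eventually_gt_memI_leftFilter (hu : MemI a b u) :
    ∀ᶠ x in leftFilter b, u < x ∧ MemI a b x := by
  filter_upwards [preimage_mem_comap (Ioo_mem_nhdsLT hu.2)] with x hx
  exact ⟨EReal.coe_lt_coe_iff.1 hx.1, hu.1.trans hx.1, hx.2⟩

theorem exists_memI_forall_of_eventually_leftFilter (hab : a < b) {p : ℝ → Prop}
    (h : ∀ᶠ x in leftFilter b, p x) : ∃ c, MemI a b c ∧ ∀ x, MemI c b x → p x := by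
  obtain ⟨t, ht, hsub⟩ := mem_comap.1 h
  obtain ⟨l, hl, hIoo⟩ := (mem_nhdsLT_iff_exists_Ioo_subset' hab).1 ht
  obtain ⟨c, hc, hcb⟩ := EReal.lt_iff_exists_real_btwn.1 (max_lt (mem_Iio.1 hl) hab)
  refine ⟨c, ⟨(le_max_right l a).trans_lt hc, hcb⟩, fun x hx => hsub ?_⟩
  exact hIoo ⟨((le_max_left l a).trans_lt hc).trans hx.1, hx.2⟩

end Interval

section Regulated

variable {a b : EReal} {f g φ α : ℝ → ℝ} {x : ℝ}

theorem RegulatedOn'.tendsto_leftLim (hf : RegulatedOn' f a b) (hx : MemI a b x) :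
    Tendsto f (𝓝[<] x) (𝓝 (leftLim f x)) :=
  tendsto_leftLim_of_tendsto (hf x hx).1

theorem RegulatedOn'.tendsto_rightLim (hf : RegulatedOn' f a b) (hx : MemI a b x) :
    Tendsto f (𝓝[>] x) (𝓝 (rightLim f x)) :=
  tendsto_rightLim_of_tendsto (hf x hx).2

theorem RegulatedOn'.lincomb (hf : RegulatedOn' f a b) (hg : RegulatedOn' g a b) (c₁ c₂ : ℝ) :
    RegulatedOn' (fun t => c₁ * f t + c₂ * g t) a b := fun _ hx =>
  ⟨⟨_, ((hf.tendsto_leftLim hx).const_mul c₁).add ((hg.tendsto_leftLim hx).const_mul c₂)⟩,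
    ⟨_, ((hf.tendsto_rightLim hx).const_mul c₁).add ((hg.tendsto_rightLim hx).const_mul c₂)⟩⟩

theorem RegulatedOn'.leftLim_lincomb (hf : RegulatedOn' f a b) (hg : RegulatedOn' g a b)
    (c₁ c₂ : ℝ) (hx : MemI a b x) :
    leftLim (fun t => c₁ * f t + c₂ * g t) x = c₁ * leftLim f x + c₂ * leftLim g x :=
  leftLim_eq_of_tendsto
    (((hf.tendsto_leftLim hx).const_mul c₁).add ((hg.tendsto_leftLim hx).const_mul c₂))

theorem RegulatedOn'.rightLim_lincomb (hf : RegulatedOn' f a b) (hg : RegulatedOn' g a b)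
    (c₁ c₂ : ℝ) (hx : MemI a b x) :
    rightLim (fun t => c₁ * f t + c₂ * g t) x = c₁ * rightLim f x + c₂ * rightLim g x :=
  rightLim_eq_of_tendsto
    (((hf.tendsto_rightLim hx).const_mul c₁).add ((hg.tendsto_rightLim hx).const_mul c₂))

theorem RegulatedOn'.leftLim_le_rightLim (hφ : RegulatedOn' φ a b) (hx : MemI a b x)
    (H : ∀ᶠ h in 𝓝[>] 0, rightLim φ (x - h) < leftLim φ (x + h)) :
    leftLim φ x ≤ rightLim φ x :=
  leftLim_le_rightLim_of_eventually_lt (hφ.tendsto_leftLim hx) (hφ.tendsto_rightLim hx) H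

theorem RegulatedOn'.monotoneOn_leftLim (hφ : RegulatedOn' φ a b)
    (H : ∀ x, MemI a b x → ∀ᶠ h in 𝓝[>] 0, rightLim φ (x - h) < leftLim φ (x + h)) :
    MonotoneOn (leftLim φ) {x | MemI a b x} := by
  intro u hu v hv huv
  rcases huv.eq_or_lt with rfl | huv
  · rfl
  have hI := Icc_subset_setOf_memI hu hv
  refine le_of_forall_lt_imp_le_of_dense fun K hK => ?_
  set s := {t | K ≤ rightLim φ t}
  have hclosed : IsClosed (s ∩ Icc u v) := by
    have husc : UpperSemicontinuousOn (rightLim φ) (Icc u v) := fun t ht =>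
      (upperSemicontinuousAt_rightLim (hφ.tendsto_leftLim (hI ht)) (hφ.tendsto_rightLim (hI ht))
        (hφ.leftLim_le_rightLim (hI ht) (H t (hI ht)))).upperSemicontinuousWithinAt _
    obtain ⟨C, hC, hsC⟩ := upperSemicontinuousOn_iff_preimage_Ici.1 husc K
    rw [inter_comm]
    exact hsC ▸ isClosed_Icc.inter hC
  have hstep : ∀ t ∈ Ico u v, Icc u t ⊆ s → s ∈ 𝓝[>] t := by
    rintro t ⟨hut, htv⟩ hts
    have ht : MemI a b t := hI ⟨hut, htv.le⟩
    have hleft : ∀ᶠ h in 𝓝[>] 0, K ≤ rightLim φ (t - h) := by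
      rcases hut.eq_or_lt with rfl | hut
      · exact (((tendsto_rightLim_nhdsWithin isOpen_Iio (hφ.tendsto_leftLim hu)).comp
          (tendsto_sub_nhdsGT_zero u)).eventually_const_lt hK).mono fun _ h => h.le
      · filter_upwards [Ioo_mem_nhdsGT (sub_pos.2 hut)] with h hh
        exact hts ⟨by linarith [hh.2], by linarith [hh.1]⟩
    rw [← add_zero t, ← map_add_left_nhdsGT, mem_map]
    filter_upwards [hleft, H t ht, eventually_memI_add ht] with h h₁ h₂ h₃
    exact h₁.trans (h₂.le.trans (hφ.leftLim_le_rightLim h₃ (H _ h₃)))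
  have hu_mem : u ∈ s := hK.le.trans (hφ.leftLim_le_rightLim hu (H u hu))
  have hsub := hclosed.Icc_subset_of_forall_mem_nhdsGT_of_Icc_subset hu_mem hstep
  refine ge_of_tendsto (tendsto_rightLim_nhdsWithin isOpen_Iio (hφ.tendsto_leftLim hv)) ?_
  filter_upwards [Ioo_mem_nhdsLT huv] with t ht using hsub (Ioo_subset_Icc_self ht)

theorem RegulatedOn'.strictMonoOn_leftLim (hφ : RegulatedOn' φ a b)
    (H : ∀ x, MemI a b x → ∀ᶠ h in 𝓝[>] 0, rightLim φ (x - h) < leftLim φ (x + h)) :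
    StrictMonoOn (leftLim φ) {x | MemI a b x} := by
  intro u hu v hv huv
  have hI := Icc_subset_setOf_memI hu hv
  set m := (u + v) / 2 with hm_def
  have hm : MemI a b m := hI ⟨by linarith, by linarith⟩
  obtain ⟨h, hlt, hh⟩ :=
    ((H m hm).and (Ioo_mem_nhdsGT (by linarith : (0 : ℝ) < (v - u) / 2))).exists
  have hmh : MemI a b (m - h) := hI ⟨by linarith [hh.2, hm_def], by linarith [hh.1, hm_def]⟩
  have hmh' : MemI a b (m + h) := hI ⟨by linarith [hh.1, hm_def], by linarith [hh.2, hm_def]⟩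
  have hmono := hφ.monotoneOn_leftLim H
  calc leftLim φ u ≤ leftLim φ (m - h) := hmono hu hmh (by linarith [hh.2, hm_def])
    _ ≤ rightLim φ (m - h) := hφ.leftLim_le_rightLim hmh (H _ hmh)
    _ < leftLim φ (m + h) := hlt
    _ ≤ leftLim φ v := hmono hmh' hv (by linarith [hh.2, hm_def])

theorem StrictMonoOn.eventually_rightLim_sub_lt_leftLim_add
    (hα : StrictMonoOn α {x | MemI a b x}) (hx : MemI a b x) :
    ∀ᶠ h in 𝓝[>] 0, rightLim α (x - h) < leftLim α (x + h) := by
  filter_upwards [eventually_memI_add hx, eventually_memI_sub hx, self_mem_nhdsWithin]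
    with h hxh hxh' (hh : 0 < h)
  have hmid : MemI a b (x - h / 2) := Icc_subset_setOf_memI hxh' hx ⟨by linarith, by linarith⟩
  calc rightLim α (x - h) ≤ α (x - h / 2) :=
        rightLim_le_of_monotoneOn (hα.monotoneOn.mono (Icc_subset_setOf_memI hxh' hmid))
          (by linarith)
    _ < α x := hα hmid hx (by linarith)
    _ ≤ leftLim α (x + h) :=
        le_leftLim_of_monotoneOn (hα.monotoneOn.mono (Icc_subset_setOf_memI hx hxh))
          (by linarith)

theorem HasDerivAlpha.lincomb (hf : RegulatedOn' f a b) (hg : RegulatedOn' g a b)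
    (hx : MemI a b x) {A B : ℝ} (hDf : HasDerivAlpha f α x A) (hDg : HasDerivAlpha g α x B)
    (c₁ c₂ : ℝ) : HasDerivAlpha (fun t => c₁ * f t + c₂ * g t) α x (c₁ * A + c₂ * B) := by
  refine ((hDf.const_mul c₁).add (hDg.const_mul c₂)).congr' ?_
  filter_upwards [eventually_memI_add hx, eventually_memI_sub hx] with h hxh hxh'
  rw [hf.leftLim_lincomb hg c₁ c₂ hxh, hf.rightLim_lincomb hg c₁ c₂ hxh']
  ring

theorem HasDerivAlpha.eventually_rightLim_sub_lt_leftLim_add {A : ℝ}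
    (hD : HasDerivAlpha φ α x A) (hA : 0 < A)
    (hα : ∀ᶠ h in 𝓝[>] 0, rightLim α (x - h) < leftLim α (x + h)) :
    ∀ᶠ h in 𝓝[>] 0, rightLim φ (x - h) < leftLim φ (x + h) := by
  filter_upwards [hD.eventually (eventually_gt_nhds hA), hα] with h hq hden
  linarith [(div_pos_iff_of_pos_right (sub_pos.2 hden)).1 hq]

theorem strictMonoOn_lincomb_leftLim {Df Dg : ℝ → ℝ} (hf : RegulatedOn' f a b)
    (hg : RegulatedOn' g a b) (hα : StrictMonoOn α {x | MemI a b x})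
    (hDf : ∀ x, MemI a b x → HasDerivAlpha f α x (Df x))
    (hDg : ∀ x, MemI a b x → HasDerivAlpha g α x (Dg x)) {c₁ c₂ : ℝ}
    (hpos : ∀ x, MemI a b x → 0 < c₁ * Df x + c₂ * Dg x) :
    StrictMonoOn (fun x => c₁ * leftLim f x + c₂ * leftLim g x) {x | MemI a b x} :=
  ((hf.lincomb hg c₁ c₂).strictMonoOn_leftLim fun x hx =>
    ((hDf x hx).lincomb hf hg hx (hDg x hx) c₁ c₂).eventually_rightLim_sub_lt_leftLim_add
      (hpos x hx) (hα.eventually_rightLim_sub_lt_leftLim_add hx)).congr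
    fun _ hx => hf.leftLim_lincomb hg c₁ c₂ hx

end Regulated

section LHopital

variable {a b : EReal} {f g α Df Dg : ℝ → ℝ}

theorem exists_eventually_lincomb_leftLim_lt (hab : a < b) (hf : RegulatedOn' f a b)
    (hg : RegulatedOn' g a b) (hα : StrictMonoOn α {x | MemI a b x})
    (hDf : ∀ x, MemI a b x → HasDerivAlpha f α x (Df x))
    (hDg : ∀ x, MemI a b x → HasDerivAlpha g α x (Dg x)) {c₁ c₂ : ℝ}
    (hpos : ∀ᶠ x in leftFilter b, 0 < c₁ * Df x + c₂ * Dg x) :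
    ∃ u, ∀ᶠ x in leftFilter b,
      c₁ * leftLim f u + c₂ * leftLim g u < c₁ * leftLim f x + c₂ * leftLim g x := by
  obtain ⟨c, hc, hcpos⟩ := exists_memI_forall_of_eventually_leftFilter hab hpos
  have hsub : ∀ x, MemI c b x → MemI a b x := fun x hx => ⟨hc.1.trans hx.1, hx.2⟩
  have hmono := strictMonoOn_lincomb_leftLim (fun x hx => hf x (hsub x hx))
    (fun x hx => hg x (hsub x hx)) (hα.mono fun x hx => hsub x hx)
    (fun x hx => hDf x (hsub x hx)) (fun x hx => hDg x (hsub x hx)) hcpos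
  obtain ⟨u, hcu, hub⟩ := EReal.lt_iff_exists_real_btwn.1 hc.2
  refine ⟨u, ?_⟩
  filter_upwards [eventually_gt_memI_leftFilter (a := (c : EReal)) ⟨hcu, hub⟩] with x hx
  exact hmono ⟨hcu, hub⟩ hx.2 hx.1

theorem eventually_div_lt_of_le_mul_add {ι : Type*} {l : Filter ι} {F G : ι → ℝ}
    (hG : Tendsto G l atTop) {M M' : ℝ} (hM : M < M') (C : ℝ)
    (hFG : ∀ᶠ x in l, F x ≤ M * G x + C) : ∀ᶠ x in l, F x / G x < M' := by
  have hC : Tendsto (fun x => C / G x) l (𝓝 0) := tendsto_const_nhds.div_atTop hG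
  filter_upwards [hFG, hG.eventually_gt_atTop 0, hC.eventually_lt_const (sub_pos.2 hM)]
    with x hFx hGx hCx
  rw [div_lt_iff₀ hGx] at hCx ⊢
  linarith

theorem eventually_leftLim_div_lt (hab : a < b) (hf : RegulatedOn' f a b)
    (hg : RegulatedOn' g a b) (hα : StrictMonoOn α {x | MemI a b x})
    (hDf : ∀ x, MemI a b x → HasDerivAlpha f α x (Df x))
    (hDg : ∀ x, MemI a b x → HasDerivAlpha g α x (Dg x))
    (hginf : Tendsto (leftLim g) (leftFilter b) atTop) {M M' : ℝ}
    (hM : ∀ᶠ x in leftFilter b, Df x < M * Dg x) (hMM' : M < M') :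
    ∀ᶠ x in leftFilter b, leftLim f x / leftLim g x < M' := by
  obtain ⟨u, hu⟩ := exists_eventually_lincomb_leftLim_lt hab hf hg hα hDf hDg
    (c₁ := -1) (c₂ := M) (hM.mono fun x hx => by linarith)
  refine eventually_div_lt_of_le_mul_add hginf hMM' (leftLim f u - M * leftLim g u) ?_
  filter_upwards [hu] with x hx
  linarith

theorem eventually_lt_leftLim_div (hab : a < b) (hf : RegulatedOn' f a b)
    (hg : RegulatedOn' g a b) (hα : StrictMonoOn α {x | MemI a b x})
    (hDf : ∀ x, MemI a b x → HasDerivAlpha f α x (Df x))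
    (hDg : ∀ x, MemI a b x → HasDerivAlpha g α x (Dg x))
    (hginf : Tendsto (leftLim g) (leftFilter b) atTop) {m m' : ℝ}
    (hm : ∀ᶠ x in leftFilter b, m * Dg x < Df x) (hm'm : m' < m) :
    ∀ᶠ x in leftFilter b, m' < leftLim f x / leftLim g x := by
  obtain ⟨u, hu⟩ := exists_eventually_lincomb_leftLim_lt hab hf hg hα hDf hDg
    (c₁ := 1) (c₂ := -m) (hm.mono fun x hx => by linarith)
  have hneg := eventually_div_lt_of_le_mul_add (F := fun x => -leftLim f x) hginf
    (neg_lt_neg hm'm) (m * leftLim g u - leftLim f u) (by filter_upwards [hu] with x hx; linarith)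
  filter_upwards [hneg] with x hx
  rw [neg_div] at hx
  linarith

end LHopital

/-- L'Hospital's rule for regulated functions, `∞` case. -/
theorem stmt16 (a b : EReal) (hab : a < b) (f g α : ℝ → ℝ) (Df Dg : ℝ → ℝ) (A : EReal)
    (hf : RegulatedOn' f a b) (hg : RegulatedOn' g a b)
    (hα : StrictMonoOn α {x : ℝ | MemI a b x})
    (hDf : ∀ x : ℝ, MemI a b x → HasDerivAlpha f α x (Df x))
    (hDg : ∀ x : ℝ, MemI a b x → HasDerivAlpha g α x (Dg x))
    (hsign : (∀ x : ℝ, MemI a b x → 0 < Dg x) ∨ (∀ x : ℝ, MemI a b x → Dg x < 0))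
    (hratio : Tendsto (fun x : ℝ => ((Df x / Dg x : ℝ) : EReal)) (leftFilter b) (𝓝 A))
    (hginf : Tendsto (leftLim g) (leftFilter b) atTop) :
    Tendsto (fun x : ℝ => ((leftLim f x / leftLim g x : ℝ) : EReal))
      (leftFilter b) (𝓝 A) := by
  have := leftFilter_neBot (bot_le.trans_lt hab)
  obtain ⟨c, hc, hcb⟩ := EReal.lt_iff_exists_real_btwn.1 hab
  have hmem : ∀ᶠ x in leftFilter b, MemI a b x :=
    (eventually_gt_memI_leftFilter ⟨hc, hcb⟩).mono fun _ hx => hx.2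
  have hDg_pos : ∀ᶠ x in leftFilter b, 0 < Dg x := by
    refine hmem.mono (hsign.resolve_right fun hneg => ?_)
    obtain ⟨u, hu⟩ := exists_eventually_lincomb_leftLim_lt hab hf hg hα hDf hDg
      (c₁ := 0) (c₂ := -1) (hmem.mono fun x hx => by linarith [hneg x hx])
    obtain ⟨x, hx, hgx⟩ := (hu.and (hginf.eventually_gt_atTop (leftLim g u))).exists
    linarith
  refine tendsto_order.2 ⟨fun A' hA' => ?_, fun A' hA' => ?_⟩
  · obtain ⟨m', hA'm', hm'A⟩ := EReal.lt_iff_exists_real_btwn.1 hA'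
    obtain ⟨m, hm'm, hmA⟩ := EReal.lt_iff_exists_real_btwn.1 hm'A
    have hm : ∀ᶠ x in leftFilter b, m * Dg x < Df x := by
      filter_upwards [(tendsto_order.1 hratio).1 m hmA, hDg_pos] with x hx hx₀
      rwa [EReal.coe_lt_coe_iff, lt_div_iff₀ hx₀] at hx
    filter_upwards [eventually_lt_leftLim_div hab hf hg hα hDf hDg hginf hm
      (EReal.coe_lt_coe_iff.1 hm'm)] with x hx
    exact hA'm'.trans (EReal.coe_lt_coe_iff.2 hx)
  · obtain ⟨M', hAM', hM'A'⟩ := EReal.lt_iff_exists_real_btwn.1 hA'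
    obtain ⟨M, hAM, hMM'⟩ := EReal.lt_iff_exists_real_btwn.1 hAM'
    have hM : ∀ᶠ x in leftFilter b, Df x < M * Dg x := by
      filter_upwards [(tendsto_order.1 hratio).2 M hAM, hDg_pos] with x hx hx₀
      rwa [EReal.coe_lt_coe_iff, div_lt_iff₀ hx₀] at hx
    filter_upwards [eventually_leftLim_div_lt hab hf hg hα hDf hDg hginf hM
      (EReal.coe_lt_coe_iff.1 hMM')] with x hx
    exact (EReal.coe_lt_coe_iff.2 hx).trans hM'A'
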